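/- arXiv:1307.1873 — 2 statements merged into one kernel-verified Lean document; each statement's English description precedes it below -/
import Mathlib

section
/- For fixed t > 0, the explicit rarefaction wave solution \tilde{\rho}_j(t) = (\sum_{k=0}^{j-1} t^k/k!)/(\sum_{k=0}^{j} t^k/k!) is strictly increasing in j \geq 1, i.e. \tilde{\rho}_{j+1}(t) > \tilde{\rho}_j(t). -/
open scoped BigOperators

/-- Partial exponential sum `q_j(t) = ∑_{k=0}^{j-1} t^k/k!`. -/
noncomputable def q (j : ℕ) (t : ℝ) : ℝ :=
  ∑ k ∈ Finset.range j, t ^ k / (Nat.factorial k : ℝ)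

/-- The explicit rarefaction wave `ρ_j = q_j / q_{j+1}`. -/
noncomputable def rarefaction (j : ℕ) (t : ℝ) : ℝ := q j t / q (j + 1) t

/-!
With `aⱼ = tʲ/j!` we have `q_{j+1} = q_j + a_j`, so `ρ_j < ρ_{j+1}` is the
log-concavity `q_j q_{j+2} < q_{j+1}²`, which reduces to `a_{j+1} q_j < a_j q_{j+1}`, i.e.
`t/(j+1) · q_j < q_{j+1}`. Term by term, `t/(j+1) · t^k/k! ≤ t^{k+1}/(k+1)!` for `k < j`,
and the constant term `1` of `q_{j+1}` makes the inequality strict.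
-/

lemma pow_succ_div_factorial_succ (t : ℝ) (k : ℕ) :
    t ^ (k + 1) / ((k + 1).factorial : ℝ) = t / (k + 1) * (t ^ k / k.factorial) := by
  push_cast [Nat.factorial_succ]
  rw [pow_succ']
  field_simp

lemma q_succ (j : ℕ) (t : ℝ) : q (j + 1) t = q j t + t ^ j / j.factorial :=
  Finset.sum_range_succ _ _

lemma q_succ_eq_one_add (j : ℕ) (t : ℝ) :
    q (j + 1) t = 1 + ∑ k ∈ Finset.range j, t ^ (k + 1) / ((k + 1).factorial : ℝ) := by
  rw [q, Finset.sum_range_succ', add_comm]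
  simp

lemma q_succ_pos {t : ℝ} (ht : 0 ≤ t) (j : ℕ) : 0 < q (j + 1) t := by
  rw [q_succ_eq_one_add]
  have : 0 ≤ ∑ k ∈ Finset.range j, t ^ (k + 1) / ((k + 1).factorial : ℝ) :=
    Finset.sum_nonneg fun k _ => by positivity
  linarith

lemma div_succ_mul_q_lt_q_succ {t : ℝ} (ht : 0 ≤ t) (j : ℕ) :
    t / (j + 1) * q j t < q (j + 1) t := by
  have termwise : ∀ k ∈ Finset.range j,
      t / (j + 1) * (t ^ k / k.factorial) ≤ t ^ (k + 1) / ((k + 1).factorial : ℝ) := by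
    intro k hk
    have hkj : (k : ℝ) + 1 ≤ j + 1 := by exact_mod_cast Nat.succ_le_succ (Finset.mem_range.mp hk).le
    rw [pow_succ_div_factorial_succ]
    gcongr
  calc t / (j + 1) * q j t
      = ∑ k ∈ Finset.range j, t / (j + 1) * (t ^ k / k.factorial) := Finset.mul_sum _ _ _
    _ ≤ ∑ k ∈ Finset.range j, t ^ (k + 1) / ((k + 1).factorial : ℝ) := Finset.sum_le_sum termwise
    _ < q (j + 1) t := by rw [q_succ_eq_one_add]; linarith

lemma q_mul_q_lt_sq {t : ℝ} (ht : 0 < t) (j : ℕ) : q j t * q (j + 2) t < q (j + 1) t ^ 2 := by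
  have ha : 0 < t ^ j / j.factorial := by positivity
  have key : t ^ (j + 1) / ((j + 1).factorial : ℝ) * q j t < t ^ j / j.factorial * q (j + 1) t := by
    rw [pow_succ_div_factorial_succ, mul_comm (t / _), mul_assoc]
    exact mul_lt_mul_of_pos_left (div_succ_mul_q_lt_q_succ ht.le j) ha
  linear_combination key + q j t * q_succ (j + 1) t - q (j + 1) t * q_succ j t

theorem rarefaction_strictly_increasing_in_j_general (t : ℝ) (ht : 0 < t) (j : ℕ) :
    rarefaction j t < rarefaction (j + 1) t := by
  rw [rarefaction, rarefaction, div_lt_div_iff₀ (q_succ_pos ht.le j) (q_succ_pos ht.le (j + 1))]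
  simpa [sq] using q_mul_q_lt_sq ht j

theorem rarefaction_strictly_increasing_in_j (t : ℝ) (ht : 0 < t) (j : ℕ) (hj : 1 ≤ j) :
    rarefaction j t < rarefaction (j + 1) t :=
  rarefaction_strictly_increasing_in_j_general t ht j
end

section
/- With \tilde{\gamma}_j(t) = -\int_0^t (\tilde{\rho}_j(s) - \tilde{\rho}_{j-1}(s)) ds as above, if \epsilon t \leq 1 then |\tilde{\gamma}_j(t)| \leq (1/8)\log(1 + \epsilon t / j) \leq \epsilon t/(8j) for all j \geq 1. -/
/-!
Write `P_n(x) = ∑_{k<n} x^k / k!`. Since `P_{n+1}' = P_n`, the wave is a logarithmic derivative,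
`ρ̃_n(s) = (1/8) d/ds log P_{n+1}(εs)`, so `γ̃_j(t) = -(1/8) log (P_{j+1}(εt) / P_j(εt))`.
For `x ≥ 0` the quotient `P_{j+1}(x) / P_j(x) = 1 + x^j / (j! P_j(x))` lies between `1` and
`1 + x/j`, because `P_j(x)` dominates its last term `x^(j-1)/(j-1)!`. Finally `log (1 + y) ≤ y`.
-/

open scoped BigOperators

/-- The scaled rarefaction wave with amplitude `ε/8`. -/
noncomputable def scaledRarefaction (ε : ℝ) (j : ℕ) (t : ℝ) : ℝ :=
  if j = 0 then 0 else
    (ε / 8) * (∑ k ∈ Finset.range j, (ε * t) ^ k / (Nat.factorial k : ℝ)) /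
      (∑ k ∈ Finset.range (j + 1), (ε * t) ^ k / (Nat.factorial k : ℝ))

/-- `γ̃_j(t) = -∫_0^t (ρ̃_j(s) - ρ̃_{j-1}(s)) ds`. -/
noncomputable def gammaTilde (ε : ℝ) (j : ℕ) (t : ℝ) : ℝ :=
  -∫ s in (0:ℝ)..t, (scaledRarefaction ε j s - scaledRarefaction ε (j - 1) s)

noncomputable def expPartialSum (n : ℕ) (x : ℝ) : ℝ :=
  ∑ k ∈ Finset.range n, x ^ k / (Nat.factorial k : ℝ)

namespace expPartialSum

lemma succ (n : ℕ) (x : ℝ) :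
    expPartialSum (n + 1) x = expPartialSum n x + x ^ n / (Nat.factorial n : ℝ) :=
  Finset.sum_range_succ _ _

lemma nonneg (n : ℕ) {x : ℝ} (hx : 0 ≤ x) : 0 ≤ expPartialSum n x :=
  Finset.sum_nonneg fun _ _ => by positivity

lemma le_succ (n : ℕ) {x : ℝ} (hx : 0 ≤ x) :
    expPartialSum n x ≤ expPartialSum (n + 1) x := by
  rw [succ]
  linarith [(by positivity : 0 ≤ x ^ n / (n.factorial : ℝ))]

lemma one_le (n : ℕ) {x : ℝ} (hx : 0 ≤ x) : 1 ≤ expPartialSum (n + 1) x := by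
  rw [expPartialSum, Finset.sum_range_succ']
  simpa using Finset.sum_nonneg fun k (_ : k ∈ Finset.range n) =>
    (by positivity : 0 ≤ x ^ (k + 1) / ((k + 1).factorial : ℝ))

lemma pos (n : ℕ) {x : ℝ} (hx : 0 ≤ x) : 0 < expPartialSum (n + 1) x :=
  one_pos.trans_le (one_le n hx)

lemma eval_zero (n : ℕ) : expPartialSum (n + 1) 0 = 1 := by
  simp [expPartialSum, Finset.sum_range_succ']

lemma continuous (n : ℕ) : Continuous (expPartialSum n) :=
  continuous_finsetSum _ fun k _ => (continuous_pow k).div_const _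

lemma hasDerivAt (n : ℕ) (x : ℝ) :
    HasDerivAt (expPartialSum (n + 1)) (expPartialSum n x) x := by
  induction n with
  | zero =>
    have hone : expPartialSum 1 = fun _ => 1 := funext fun y => by simp [expPartialSum]
    simpa [hone, expPartialSum] using hasDerivAt_const x (1 : ℝ)
  | succ n ih =>
    have hterm : HasDerivAt (fun y => y ^ (n + 1) / ((n + 1).factorial : ℝ))
        (x ^ n / (n.factorial : ℝ)) x := by
      refine ((hasDerivAt_pow (n + 1) x).div_const ((n + 1).factorial : ℝ)).congr_deriv ?_
      rw [Nat.factorial_succ]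
      push_cast
      field_simp
    have hsum := ih.add hterm
    rw [← succ] at hsum
    exact hsum.congr_of_eventuallyEq (Filter.Eventually.of_forall fun y => succ (n + 1) y)

lemma le_one_add_div_mul (n : ℕ) {x : ℝ} (hx : 0 ≤ x) :
    expPartialSum (n + 2) x ≤ (1 + x / (n + 1)) * expPartialSum (n + 1) x := by
  have hlast : x ^ n / (n.factorial : ℝ) ≤ expPartialSum (n + 1) x := by
    rw [succ]
    linarith [nonneg n hx]
  have hnext : x ^ (n + 1) / ((n + 1).factorial : ℝ) =
      x / (n + 1) * (x ^ n / (n.factorial : ℝ)) := by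
    rw [Nat.factorial_succ, pow_succ]
    push_cast
    field_simp
  rw [succ (n + 1), hnext, add_mul, one_mul]
  gcongr

end expPartialSum

-- Also at `n = 0`, where both sides vanish because the empty sum `expPartialSum 0` is `0`.
lemma scaledRarefaction_eq (ε : ℝ) (n : ℕ) (s : ℝ) :
    scaledRarefaction ε n s =
      ε / 8 * expPartialSum n (ε * s) / expPartialSum (n + 1) (ε * s) := by
  rcases n with _ | n <;> simp [scaledRarefaction, expPartialSum]

lemma hasDerivAt_log_expPartialSum {ε s : ℝ} (n : ℕ) (hs : 0 ≤ ε * s) :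
    HasDerivAt (fun u => 1 / 8 * Real.log (expPartialSum (n + 1) (ε * u)))
      (scaledRarefaction ε n s) s := by
  have hP := (expPartialSum.hasDerivAt n (ε * s)).comp s ((hasDerivAt_id s).const_mul ε)
  refine ((hP.log (expPartialSum.pos n hs).ne').const_mul (1 / 8 : ℝ)).congr_deriv ?_
  rw [scaledRarefaction_eq]
  simp only [Function.comp_def, mul_one]
  ring

lemma continuousOn_scaledRarefaction {ε t : ℝ} (hε : 0 ≤ ε) (ht : 0 ≤ t) (n : ℕ) :
    ContinuousOn (scaledRarefaction ε n) (Set.uIcc 0 t) := by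
  have hcomp (m : ℕ) : Continuous fun s => expPartialSum m (ε * s) :=
    (expPartialSum.continuous m).comp (continuous_const.mul continuous_id)
  simp_rw [funext (scaledRarefaction_eq ε n)]
  refine (continuous_const.mul (hcomp n)).continuousOn.div (hcomp (n + 1)).continuousOn
    fun s hs => (expPartialSum.pos n (mul_nonneg hε ?_)).ne'
  exact (Set.uIcc_of_le ht ▸ hs).1

lemma integral_scaledRarefaction {ε t : ℝ} (hε : 0 ≤ ε) (ht : 0 ≤ t) (n : ℕ) :
    ∫ s in (0:ℝ)..t, scaledRarefaction ε n s =
      1 / 8 * Real.log (expPartialSum (n + 1) (ε * t)) := by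
  rw [intervalIntegral.integral_eq_sub_of_hasDerivAt
    (fun s hs => hasDerivAt_log_expPartialSum n (mul_nonneg hε (Set.uIcc_of_le ht ▸ hs).1))
    ((continuousOn_scaledRarefaction hε ht n).intervalIntegrable)]
  simp [expPartialSum.eval_zero]

lemma gammaTilde_succ {ε t : ℝ} (hε : 0 ≤ ε) (ht : 0 ≤ t) (n : ℕ) :
    gammaTilde ε (n + 1) t =
      -(1 / 8 * Real.log (expPartialSum (n + 2) (ε * t) / expPartialSum (n + 1) (ε * t))) := by
  have hx : 0 ≤ ε * t := mul_nonneg hε ht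
  rw [gammaTilde, Nat.add_sub_cancel, intervalIntegral.integral_sub
    (continuousOn_scaledRarefaction hε ht _).intervalIntegrable
    (continuousOn_scaledRarefaction hε ht _).intervalIntegrable,
    integral_scaledRarefaction hε ht, integral_scaledRarefaction hε ht,
    Real.log_div (expPartialSum.pos _ hx).ne' (expPartialSum.pos _ hx).ne']
  ring

theorem gamma_bound_general (ε : ℝ) (hε : 0 < ε) (j : ℕ) (hj : 1 ≤ j)
    (t : ℝ) (ht : 0 ≤ t) :
    |gammaTilde ε j t| ≤ (1 / 8) * Real.log (1 + ε * t / (j : ℝ)) ∧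
      (1 / 8) * Real.log (1 + ε * t / (j : ℝ)) ≤ ε * t / (8 * (j : ℝ)) := by
  obtain ⟨n, rfl⟩ : ∃ n, j = n + 1 := ⟨j - 1, by omega⟩
  have hx : 0 ≤ ε * t := mul_nonneg hε.le ht
  have hP := expPartialSum.pos n hx
  have hratio_ge : 1 ≤ expPartialSum (n + 2) (ε * t) / expPartialSum (n + 1) (ε * t) :=
    (one_le_div hP).2 (expPartialSum.le_succ _ hx)
  have hratio_le : expPartialSum (n + 2) (ε * t) / expPartialSum (n + 1) (ε * t) ≤
      1 + ε * t / (n + 1) := by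
    rw [div_le_iff₀ hP]
    exact expPartialSum.le_one_add_div_mul n hx
  have hlog_nonneg := Real.log_nonneg hratio_ge
  rw [gammaTilde_succ hε.le ht, abs_neg, abs_of_nonneg (by positivity)]
  push_cast
  constructor
  · gcongr
  · have := Real.log_le_sub_one_of_pos (x := 1 + ε * t / (n + 1)) (by positivity)
    rw [mul_comm 8, ← div_div]
    linarith

theorem gamma_bound (ε : ℝ) (hε : 0 < ε) (j : ℕ) (hj : 1 ≤ j)
    (t : ℝ) (ht : 0 ≤ t) (hts : ε * t ≤ 1) :
    |gammaTilde ε j t| ≤ (1 / 8) * Real.log (1 + ε * t / (j : ℝ)) ∧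
      (1 / 8) * Real.log (1 + ε * t / (j : ℝ)) ≤ ε * t / (8 * (j : ℝ)) :=
  gamma_bound_general ε hε j hj t ht
end
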